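/- arXiv:2402.00226 — 5 statements merged into one kernel-verified Lean document; each statement's English description precedes it below -/
import Mathlib

section
/- Assume γ < ω₁, {f_τ : τ ∈ I} is a suitable specializing family with top level γ, Q ⊆ ℚ⁺ is finite, A ⊆ I is finite, and X ⊆ T_{γ+1} is finite with unique drop-downs to γ. Then there exists a suitable specializing family {g_τ : τ ∈ I} with top level γ+1 such that: (1) f_τ ⊆ g_τ for all τ ∈ I; and (2) for all τ ∈ A, X↾γ and X are (g_τ,Q)-consistent. -/
noncomputable section

/-- The ordinal `ω₁`. -/
def omega1 : Ordinal := (Cardinal.aleph 1).ord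

/-- A normal, infinitely splitting `ω₁`-tree structure on the partial order `α`.
`height x` is the height of `x` (the order type of its set of strict predecessors,
which is linearly ordered by `pred_linear`), and `restrict x β` is the unique node
of height `β` below `x` (for `β ≤ height x`). -/
structure OmegaOneTree (α : Type) [PartialOrder α] where
  height : α → Ordinal
  restrict : α → Ordinal → α
  height_lt_omega1 : ∀ x : α, height x < omega1
  height_strictMono : ∀ {x y : α}, x < y → height x < height y
  pred_linear : ∀ {x y z : α}, y < x → z < x → y ≤ z ∨ z ≤ y
  restrict_le : ∀ (x : α) {β : Ordinal}, β ≤ height x → restrict x β ≤ x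
  height_restrict : ∀ (x : α) {β : Ordinal}, β ≤ height x → height (restrict x β) = β
  restrict_eq : ∀ {x y : α} {β : Ordinal}, y ≤ x → height y = β → restrict x β = y
  level_nonempty : ∀ β : Ordinal, β < omega1 → ∃ x : α, height x = β
  level_countable : ∀ β : Ordinal, {x : α | height x = β}.Countable
  root_exists : ∃ r : α, height r = 0 ∧ ∀ x : α, r ≤ x
  splitting : ∀ x : α, {y : α | x < y ∧ height y = height x + 1}.Infinite
  exists_above : ∀ (x : α) {β : Ordinal}, height x < β → β < omega1 →
    ∃ y : α, x < y ∧ height y = β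
  limit_eq : ∀ {x y : α}, height x = height y → Order.IsSuccLimit (height x) →
    (∀ z : α, z < x ↔ z < y) → x = y

variable {α : Type} [PartialOrder α]

/-- `a` is a tuple all of whose components have height `β`
(i.e. an element of the product tree of height `β`). -/
def IsTupleOfHeight (T : OmegaOneTree α) {m : ℕ} (a : Fin m → α) (β : Ordinal) : Prop :=
  ∀ i, T.height (a i) = β

/-- `a` is a minimal injective tuple of height `β`: it is injective of height `β`
and none of its proper restrictions is injective. -/
def MinimalTuple (T : OmegaOneTree α) {m : ℕ} (a : Fin m → α) (β : Ordinal) : Prop :=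
  IsTupleOfHeight T a β ∧ Function.Injective a ∧
    ∀ γ : Ordinal, γ < β → ¬ Function.Injective (fun i => T.restrict (a i) γ)

/-- `f` is a specializing function on `U^τ↾(β+1)`, where the minimal tuple of index `τ`
is `aτ`.  Here `f` is a total function whose values only matter on tuples of height
`≤ β` lying in `U^τ` (i.e. componentwise above `aτ`, or componentwise strictly
below `aτ`). -/
def IsSpecFun (T : OmegaOneTree α) {n : ℕ} (aτ : Fin (n + 1) → α) (β : Ordinal)
    (f : (Fin (n + 1) → α) → ℚ) : Prop :=
  (∀ (c : Fin (n + 1) → α) (ζ : Ordinal), ζ ≤ β → IsTupleOfHeight T c ζ →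
      (∀ i, c i < aτ i) → f c = -1) ∧
  (∀ (c : Fin (n + 1) → α) (ζ : Ordinal), ζ ≤ β → IsTupleOfHeight T c ζ →
      (∀ i, aτ i ≤ c i) → 0 < f c) ∧
  (∀ (b c : Fin (n + 1) → α) (ζ ξ : Ordinal), ζ ≤ β → ξ ≤ β →
      IsTupleOfHeight T b ζ → IsTupleOfHeight T c ξ →
      (∀ i, aτ i ≤ b i) → (∀ i, aτ i ≤ c i) → (∀ i, b i < c i) → f b < f c)

/-- `g` extends `f` on `U^τ↾(γ+1)` (i.e. `f ⊆ g` for specializing functions with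
top levels `γ ≤` top level of `g`). -/
def SpecExtends (T : OmegaOneTree α) {n : ℕ} (aτ : Fin (n + 1) → α) (γ : Ordinal)
    (f g : (Fin (n + 1) → α) → ℚ) : Prop :=
  ∀ (c : Fin (n + 1) → α) (ζ : Ordinal), ζ ≤ γ → IsTupleOfHeight T c ζ →
    ((∀ i, aτ i ≤ c i) ∨ (∀ i, c i < aτ i)) → g c = f c

/-- `X↾lo` and `X` are `(f,Q)`-consistent: for every `q ∈ Q` and every tuple `c` of
elements of `X` lying in the derived tree of `aτ`, if `f(c↾lo) < q` then `f(c) < q`. -/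
def SpecConsistent (T : OmegaOneTree α) {n : ℕ} (aτ : Fin (n + 1) → α)
    (f : (Fin (n + 1) → α) → ℚ) (lo : Ordinal) (Q : Set ℚ) (X : Set α) : Prop :=
  ∀ q ∈ Q, ∀ c : Fin (n + 1) → α, (∀ i, c i ∈ X) → (∀ i, aτ i ≤ c i) →
    f (fun i => T.restrict (c i) lo) < q → f c < q

/-- The specializing family `{f τ : τ ∈ I}` with top level `γ` is suitable
(relative to the enumeration `amin` of minimal tuples). -/
def SuitableFamily (T : OmegaOneTree α) {n : ℕ} (amin : Ordinal → Fin (n + 1) → α)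
    (I : Set Ordinal) (γ : Ordinal) (f : Ordinal → (Fin (n + 1) → α) → ℚ) : Prop :=
  ∀ lo hi : Ordinal, lo < hi → hi ≤ γ →
    ∀ B : Set Ordinal, B.Finite → B ⊆ I →
      ∀ R : Set ℚ, R.Finite → (∀ q ∈ R, 0 < q) →
        ∀ t : Set α, t.Finite → (∀ x ∈ t, T.height x = hi) →
          ∀ l : ℕ, n ≤ l →
            ∀ a : Fin l → α, Function.Injective a → (∀ i, T.height (a i) = lo) →
              ∀ idx : Fin n → Fin l, Function.Injective idx →
                ∀ c : Fin n → α,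
                  (∀ k, T.height (c k) = hi ∧ c k ∉ t ∧ a (idx k) < c k) →
                  ∃ b : Fin l → α,
                    (∀ i, T.height (b i) = hi ∧ b i ∉ t ∧ a i < b i) ∧
                    (∀ k, b (idx k) = c k) ∧
                    ∀ τ ∈ B, SpecConsistent T (amin τ) (f τ) lo R (Set.range b)

/-!
On the new level put `g_τ(c) = max (f_τ(c↾γ)) 0 + δ_τ(c)` for `c` above `a^τ`, where `δ_τ(c) > 0`
is smaller than the distance from `max (f_τ(c↾γ)) 0` to every larger element of `Q` (this is the
consistency on `X`), and at most `ε(x)` for every component `x` of `c`; here `ε` is a positive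
weight on the countable level `T_{γ+1}` taking values `≥ r` at only finitely many nodes, for each
`r > 0`.

To extend `a_0, …, a_{l-1}` at level `lo` to level `γ+1` with `n` prescribed nodes `c_k`, first use
suitability of `f` to extend to level `γ` with the prescribed nodes `c_k↾γ`, then lift every other
node to an immediate successor that avoids finitely many nodes and whose weight `ε` is below every
positive gap `q - max (f_τ(e)) 0` with `q ∈ R` and `e` a tuple at level `γ`. A tuple above the
injective tuple `a^τ` is injective, so it has a lifted component, and then `δ_τ` is too small to
carry `g_τ` over any `q ∈ R` that `f_τ` stays below at level `γ`.
-/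

namespace OmegaOneTree

variable (T : OmegaOneTree α)

theorem lt_of_le_of_height_lt {x y : α} (h : x ≤ y) (hh : T.height x < T.height y) : x < y :=
  h.lt_of_ne (by rintro rfl; exact hh.false)

theorem eq_of_le_of_le_of_height_eq {x y z : α} (hx : x ≤ z) (hy : y ≤ z)
    (h : T.height x = T.height y) : x = y :=
  (T.restrict_eq hx rfl).symm.trans (T.restrict_eq hy h.symm)

theorem restrict_restrict (x : α) {β δ : Ordinal} (h₁ : β ≤ δ) (h₂ : δ ≤ T.height x) :
    T.restrict (T.restrict x δ) β = T.restrict x β := by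
  have hβ : β ≤ T.height (T.restrict x δ) := (T.height_restrict x h₂).symm ▸ h₁
  exact (T.restrict_eq ((T.restrict_le _ hβ).trans (T.restrict_le x h₂))
    (T.height_restrict _ hβ)).symm

theorem restrict_mono (x : α) {β δ : Ordinal} (h₁ : β ≤ δ) (h₂ : δ ≤ T.height x) :
    T.restrict x β ≤ T.restrict x δ := by
  rw [← T.restrict_restrict x h₁ h₂]
  exact T.restrict_le _ ((T.height_restrict x h₂).symm ▸ h₁)

theorem le_restrict_of_le {x z : α} {β : Ordinal} (h : x ≤ z) (hx : T.height x ≤ β)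
    (hz : β ≤ T.height z) : x ≤ T.restrict z β := by
  rw [← T.restrict_eq h rfl]
  exact T.restrict_mono z hx hz

theorem restrict_lt (z : α) {β : Ordinal} (h : β < T.height z) : T.restrict z β < z :=
  T.lt_of_le_of_height_lt (T.restrict_le z h.le) (by rwa [T.height_restrict z h.le])

theorem isTupleOfHeight_restrict {m : ℕ} {c : Fin m → α} {β : Ordinal}
    (h : ∀ i, β ≤ T.height (c i)) : IsTupleOfHeight T (fun i => T.restrict (c i) β) β :=
  fun i => T.height_restrict (c i) (h i)

theorem injective_of_le {m : ℕ} {a e : Fin m → α} {β : Ordinal} (ha : IsTupleOfHeight T a β)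
    (hinj : Function.Injective a) (hle : ∀ i, a i ≤ e i) : Function.Injective e :=
  fun i j hij => hinj <|
    T.eq_of_le_of_le_of_height_eq (hle i) (hij ▸ hle j) ((ha i).trans (ha j).symm)

theorem exists_succ_notMem_lt {ε : α → ℚ} {r : ℚ} {y : α} {β : Ordinal} (hy : T.height y = β)
    (hε : {x | T.height x = β + 1 ∧ r ≤ ε x}.Finite) {s : Set α} (hs : s.Finite) :
    ∃ x, y < x ∧ T.height x = β + 1 ∧ x ∉ s ∧ ε x < r := by
  subst hy
  obtain ⟨x, ⟨hyx, hx⟩, hxs⟩ := ((T.splitting y).sdiff (hs.union hε)).nonempty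
  exact ⟨x, hyx, hx, fun h => hxs (Or.inl h), not_le.1 fun h => hxs (Or.inr ⟨hx, h⟩)⟩

end OmegaOneTree

theorem Ordinal.le_add_one_iff {ζ γ : Ordinal} : ζ ≤ γ + 1 ↔ ζ = γ + 1 ∨ ζ ≤ γ := by
  rw [← Order.succ_eq_add_one]
  exact Order.le_succ_iff_eq_or_le

theorem Set.Countable.exists_pos_finite_le {β : Type*} {S : Set β} (hS : S.Countable) :
    ∃ ε : β → ℚ, (∀ x, 0 < ε x) ∧ ∀ r > 0, {x | x ∈ S ∧ r ≤ ε x}.Finite := by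
  obtain ⟨rk, hrk⟩ := Set.countable_iff_exists_injOn.1 hS
  refine ⟨fun x => 1 / (rk x + 1), fun x => by positivity, fun r hr => ?_⟩
  refine Set.Finite.of_finite_image ((Set.finite_Iic ⌊1 / r⌋₊).subset ?_)
    (hrk.mono fun x hx => hx.1)
  rintro _ ⟨x, ⟨-, hx⟩, rfl⟩
  refine Nat.le_floor ?_
  rw [le_div_iff₀ hr]
  rw [le_div_iff₀ (by positivity)] at hx
  nlinarith

section Gaps

open Filter Topology

theorem eventually_forall_lt_of_pos {ι : Type*} {s : Set ι} (hs : s.Finite) (p : ι → ℚ) :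
    ∀ᶠ r in 𝓝[>] (0 : ℚ), ∀ i ∈ s, 0 < p i → r < p i := by
  refine nhdsWithin_le_nhds (hs.eventually_all.2 fun i _ => ?_)
  by_cases hp : 0 < p i
  · exact (eventually_lt_nhds hp).mono fun r hr _ => hr
  · exact Eventually.of_forall fun r h => absurd h hp

theorem exists_pos_forall_lt_of_pos {ι : Type*} {s : Set ι} (hs : s.Finite) (p : ι → ℚ) :
    ∃ r : ℚ, 0 < r ∧ ∀ i ∈ s, 0 < p i → r < p i := by
  obtain ⟨r, hp, hr⟩ := ((eventually_forall_lt_of_pos hs p).and self_mem_nhdsWithin).exists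
  exact ⟨r, hr, hp⟩

theorem exists_pos_le_forall_add_lt {Q : Set ℚ} (hQ : Q.Finite) (m : ℚ) {ι : Type*} [Finite ι]
    {ε : ι → ℚ} (hε : ∀ i, 0 < ε i) :
    ∃ d : ℚ, 0 < d ∧ (∀ i, d ≤ ε i) ∧ ∀ q ∈ Q, m < q → m + d < q := by
  obtain ⟨d, ⟨hQd, hεd⟩, hd⟩ := (((eventually_forall_lt_of_pos hQ (· - m)).and
    (eventually_forall_lt_of_pos Set.finite_univ ε)).and self_mem_nhdsWithin).exists
  exact ⟨d, hd, fun i => (hεd i trivial (hε i)).le,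
    fun q hq hmq => by linarith [hQd q hq (sub_pos.2 hmq)]⟩

end Gaps

theorem Function.Injective.exists_apply_notMem_range {β : Type*} {n : ℕ} {e : Fin (n + 1) → β}
    (he : Function.Injective e) (c : Fin n → β) : ∃ i, e i ∉ Set.range c := by
  by_contra! h
  choose K hK using h
  have := Fintype.card_le_of_injective K fun i j hij => he (by rw [← hK i, ← hK j, hij])
  simp at this

open Classical in
/-- Tuples of height `γ + 1` that are not above `aτ` lie outside `U^τ` unless they are strictly
below `aτ`, so `-1` serves all of them. -/
def extendToSucc (T : OmegaOneTree α) {n : ℕ} (aτ : Fin (n + 1) → α) (γ : Ordinal)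
    (fτ δ : (Fin (n + 1) → α) → ℚ) (c : Fin (n + 1) → α) : ℚ :=
  if IsTupleOfHeight T c (γ + 1) then
    if ∀ i, aτ i ≤ c i then max (fτ fun i => T.restrict (c i) γ) 0 + δ c else -1
  else fτ c

section ExtendToSucc

variable {T : OmegaOneTree α} {n : ℕ} {aτ : Fin (n + 1) → α} {γ : Ordinal}
  {fτ δ : (Fin (n + 1) → α) → ℚ}

theorem extendToSucc_of_height_le {c : Fin (n + 1) → α} {ζ : Ordinal} (hc : IsTupleOfHeight T c ζ)
    (hζ : ζ ≤ γ) : extendToSucc T aτ γ fτ δ c = fτ c := by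
  rw [extendToSucc, if_neg]
  exact fun h => (Order.lt_add_one_iff.2 hζ).ne ((hc 0).symm.trans (h 0))

theorem extendToSucc_of_ge {c : Fin (n + 1) → α} (hc : IsTupleOfHeight T c (γ + 1))
    (hac : ∀ i, aτ i ≤ c i) :
    extendToSucc T aτ γ fτ δ c = max (fτ fun i => T.restrict (c i) γ) 0 + δ c := by
  rw [extendToSucc, if_pos hc, if_pos hac]

theorem extendToSucc_of_lt {c : Fin (n + 1) → α} (hc : IsTupleOfHeight T c (γ + 1))
    (hca : ∀ i, c i < aτ i) : extendToSucc T aτ γ fτ δ c = -1 := by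
  rw [extendToSucc, if_pos hc, if_neg]
  exact fun h => (h 0).not_gt (hca 0)

theorem IsSpecFun.apply_le_apply {β ζ ξ : Ordinal} (hf : IsSpecFun T aτ β fτ)
    {b c : Fin (n + 1) → α} (hb : IsTupleOfHeight T b ζ) (hc : IsTupleOfHeight T c ξ)
    (hζξ : ζ ≤ ξ) (hξ : ξ ≤ β) (hab : ∀ i, aτ i ≤ b i) (hac : ∀ i, aτ i ≤ c i)
    (hbc : ∀ i, b i ≤ c i) : fτ b ≤ fτ c := by
  rcases hζξ.eq_or_lt with rfl | hlt
  · obtain rfl : b = c := funext fun i =>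
      T.eq_of_le_of_le_of_height_eq (hbc i) le_rfl ((hb i).trans (hc i).symm)
    exact le_rfl
  · exact (hf.2.2 b c ζ ξ (hlt.le.trans hξ) hξ hb hc hab hac fun i =>
      T.lt_of_le_of_height_lt (hbc i) (by rw [hb i, hc i]; exact hlt)).le

theorem isSpecFun_extendToSucc (hf : IsSpecFun T aτ γ fτ) (hδ : ∀ c, 0 < δ c) :
    IsSpecFun T aτ (γ + 1) (extendToSucc T aτ γ fτ δ) := by
  refine ⟨fun c ζ hζ hc hca => ?_, fun c ζ hζ hc hac => ?_,
    fun b c ζ ξ _ hξ hb hc hab hac hbc => ?_⟩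
  · rcases Ordinal.le_add_one_iff.1 hζ with rfl | hζ
    · exact extendToSucc_of_lt hc hca
    · rw [extendToSucc_of_height_le hc hζ]
      exact hf.1 c ζ hζ hc hca
  · rcases Ordinal.le_add_one_iff.1 hζ with rfl | hζ
    · rw [extendToSucc_of_ge hc hac]
      exact add_pos_of_nonneg_of_pos (le_max_right _ _) (hδ c)
    · rw [extendToSucc_of_height_le hc hζ]
      exact hf.2.1 c ζ hζ hc hac
  · have hζξ : ζ < ξ := by simpa only [hb 0, hc 0] using T.height_strictMono (hbc 0)
    have hζ : ζ ≤ γ := Order.lt_add_one_iff.1 (hζξ.trans_le hξ)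
    rw [extendToSucc_of_height_le hb hζ]
    rcases Ordinal.le_add_one_iff.1 hξ with rfl | hξ
    · rw [extendToSucc_of_ge hc hac]
      have hcγ : ∀ i, γ ≤ T.height (c i) := fun i => (hc i).symm ▸ le_self_add
      have hble : ∀ i, b i ≤ T.restrict (c i) γ := fun i =>
        T.le_restrict_of_le (hbc i).le ((hb i).le.trans hζ) (hcγ i)
      have := hf.apply_le_apply hb (T.isTupleOfHeight_restrict hcγ) hζ le_rfl hab
        (fun i => (hab i).trans (hble i)) hble
      linarith [le_max_left (fτ fun i => T.restrict (c i) γ) 0, hδ c]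
    · rw [extendToSucc_of_height_le hc hξ]
      exact hf.2.2 b c ζ ξ (hζξ.le.trans hξ) hξ hb hc hab hac hbc

theorem specExtends_extendToSucc : SpecExtends T aτ γ fτ (extendToSucc T aτ γ fτ δ) :=
  fun _ _ hζ hc _ => extendToSucc_of_height_le hc hζ

theorem specConsistent_of_height_eq {lo : Ordinal} {R : Set ℚ} {Y : Set α}
    (hY : ∀ y ∈ Y, T.height y = lo) : SpecConsistent T aτ fτ lo R Y := by
  intro q _ c hc _ hlt
  rwa [show (fun i => T.restrict (c i) lo) = c from
    funext fun i => T.restrict_eq le_rfl (hY _ (hc i))] at hlt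

theorem SpecConsistent.extendToSucc {lo hi : Ordinal} {R : Set ℚ} {Y : Set α}
    (h : SpecConsistent T aτ fτ lo R Y) (hY : ∀ y ∈ Y, T.height y = hi) (hlo : lo ≤ hi)
    (hhi : hi ≤ γ) : SpecConsistent T aτ (extendToSucc T aτ γ fτ δ) lo R Y := by
  intro q hq e he hae hlt
  have he' : IsTupleOfHeight T e hi := fun i => hY _ (he i)
  rw [extendToSucc_of_height_le (T.isTupleOfHeight_restrict fun i => (he' i).symm ▸ hlo)
    (hlo.trans hhi)] at hlt
  rw [extendToSucc_of_height_le he' hhi]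
  exact h q hq e he hae hlt

theorem specConsistent_extendToSucc_succ {Q : Set ℚ} {Y : Set α} (hQ : ∀ q ∈ Q, 0 < q)
    (hδ : ∀ c, ∀ q ∈ Q, max (fτ fun i => T.restrict (c i) γ) 0 < q →
      max (fτ fun i => T.restrict (c i) γ) 0 + δ c < q)
    (hY : ∀ y ∈ Y, T.height y = γ + 1) :
    SpecConsistent T aτ (extendToSucc T aτ γ fτ δ) γ Q Y := by
  intro q hq c hc hac hlt
  have hc' : IsTupleOfHeight T c (γ + 1) := fun i => hY _ (hc i)
  rw [extendToSucc_of_height_le (T.isTupleOfHeight_restrict fun i => (hc' i).symm ▸ le_self_add)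
    le_rfl] at hlt
  rw [extendToSucc_of_ge hc' hac]
  exact hδ c q hq (max_lt hlt (hQ q hq))

/-- An injective tuple from `Y` has a component outside the `n` nodes of `c`, hence in `W`, which
pushes `δ` below the gap above its shadow in `Y'`. -/
theorem specConsistent_extendToSucc_of_subset_union {β lo : Ordinal} {R : Set ℚ}
    {Y Y' W : Set α} (haτ : IsTupleOfHeight T aτ β) (haτinj : Function.Injective aτ)
    (hlo : lo ≤ γ) (hR : ∀ q ∈ R, 0 < q) (hY : ∀ y ∈ Y, T.height y = γ + 1)
    (hcons : SpecConsistent T aτ fτ lo R Y') (hYY' : ∀ y ∈ Y, T.restrict y γ ∈ Y')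
    (c : Fin n → α) (hYW : Y ⊆ Set.range c ∪ W) (hWaτ : ∀ w ∈ W, w ∉ Set.range aτ) {ρ : ℚ}
    (hρ : ∀ q ∈ R, ∀ e : Fin (n + 1) → α, (∀ i, e i ∈ Y') → max (fτ e) 0 < q →
      ρ < q - max (fτ e) 0)
    (hδW : ∀ e i, e i ∈ W → δ e ≤ ρ) :
    SpecConsistent T aτ (extendToSucc T aτ γ fτ δ) lo R Y := by
  intro q hq e he hae hlt
  have he' : IsTupleOfHeight T e (γ + 1) := fun i => hY _ (he i)
  obtain ⟨i, hi⟩ := (T.injective_of_le haτ haτinj hae).exists_apply_notMem_range c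
  have hiW : e i ∈ W := ((hYW (he i)).resolve_left hi)
  have hβ : β ≤ γ := by
    refine Order.lt_add_one_iff.1 ?_
    rw [← haτ i, ← he' i]
    exact T.height_strictMono ((hae i).lt_of_ne fun h => hWaτ _ hiW ⟨i, h⟩)
  have heγ : ∀ j, γ ≤ T.height (e j) := fun j => (he' j).symm ▸ le_self_add
  have hae' : ∀ j, aτ j ≤ T.restrict (e j) γ := fun j =>
    T.le_restrict_of_le (hae j) ((haτ j).trans_le hβ) (heγ j)
  rw [extendToSucc_of_height_le (T.isTupleOfHeight_restrict fun j => hlo.trans (heγ j))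
    hlo] at hlt
  have hm : max (fτ fun j => T.restrict (e j) γ) 0 < q := by
    refine max_lt (hcons q hq _ (fun j => hYY' _ (he j)) hae' ?_) (hR q hq)
    simpa only [T.restrict_restrict _ hlo (heγ _)] using hlt
  rw [extendToSucc_of_ge he' hae]
  linarith [hρ q hq _ (fun j => hYY' _ (he j)) hm, hδW e i hiW]

end ExtendToSucc

section Suitable

variable {T : OmegaOneTree α} {n : ℕ} {amin : Ordinal → Fin (n + 1) → α} {I : Set Ordinal}
  {γ : Ordinal} {f : Ordinal → (Fin (n + 1) → α) → ℚ}

theorem SuitableFamily.exists_extension_to_top (hf : SuitableFamily T amin I γ f) {lo : Ordinal}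
    (hlo : lo ≤ γ) {B : Set Ordinal} (hB : B.Finite) (hBI : B ⊆ I) {R : Set ℚ} (hR : R.Finite)
    (hRpos : ∀ q ∈ R, 0 < q) {l : ℕ} (hnl : n ≤ l) {a : Fin l → α}
    (ha : Function.Injective a) (hal : ∀ i, T.height (a i) = lo) {idx : Fin n → Fin l}
    (hidx : Function.Injective idx) {c : Fin n → α}
    (hc : ∀ k, γ ≤ T.height (c k) ∧ a (idx k) ≤ c k) :
    ∃ b : Fin l → α, (∀ i, T.height (b i) = γ ∧ a i ≤ b i) ∧
      (∀ k, b (idx k) = T.restrict (c k) γ) ∧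
      ∀ τ ∈ B, SpecConsistent T (amin τ) (f τ) lo R (Set.range b) := by
  rcases hlo.eq_or_lt with rfl | hlt
  · refine ⟨a, fun i => ⟨hal i, le_rfl⟩, fun k => (T.restrict_eq (hc k).2 (hal _)).symm,
      fun τ _ => specConsistent_of_height_eq ?_⟩
    rintro _ ⟨i, rfl⟩
    exact hal i
  · have hc' : ∀ k, T.height (T.restrict (c k) γ) = γ ∧ T.restrict (c k) γ ∉ (∅ : Set α) ∧
        a (idx k) < T.restrict (c k) γ := fun k =>
      ⟨T.height_restrict _ (hc k).1, Set.notMem_empty _,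
        T.lt_of_le_of_height_lt (T.le_restrict_of_le (hc k).2 (hal _ ▸ hlt.le) (hc k).1)
          (by rw [hal, T.height_restrict _ (hc k).1]; exact hlt)⟩
    obtain ⟨b, hb, hbidx, hcons⟩ := hf lo γ hlt le_rfl B hB hBI R hR hRpos ∅ Set.finite_empty
      (fun _ h => absurd h (Set.notMem_empty _)) l hnl a ha hal idx hidx _ hc'
    exact ⟨b, fun i => ⟨(hb i).1, (hb i).2.2.le⟩, hbidx, hcons⟩

theorem exists_lift_specConsistent {ε : α → ℚ} {δ : Ordinal → (Fin (n + 1) → α) → ℚ}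
    {B : Set Ordinal} (hamin : ∀ τ ∈ B, ∃ β, IsTupleOfHeight T (amin τ) β ∧
      Function.Injective (amin τ))
    (hε : ∀ r > 0, {x | T.height x = γ + 1 ∧ r ≤ ε x}.Finite)
    (hδε : ∀ τ c i, δ τ c ≤ ε (c i)) {lo : Ordinal} (hlo : lo ≤ γ) (hB : B.Finite)
    {R : Set ℚ} (hR : R.Finite) (hRpos : ∀ q ∈ R, 0 < q) {t : Set α} (ht : t.Finite) {l : ℕ}
    {b' : Fin l → α} (hb' : ∀ i, T.height (b' i) = γ)
    (hcons : ∀ τ ∈ B, SpecConsistent T (amin τ) (f τ) lo R (Set.range b'))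
    {idx : Fin n → Fin l} (hidx : Function.Injective idx) {c : Fin n → α}
    (hc : ∀ k, T.height (c k) = γ + 1 ∧ c k ∉ t ∧ b' (idx k) < c k) :
    ∃ b : Fin l → α, (∀ i, T.height (b i) = γ + 1 ∧ b i ∉ t ∧ b' i < b i) ∧
      (∀ k, b (idx k) = c k) ∧
      ∀ τ ∈ B, SpecConsistent T (amin τ) (extendToSucc T (amin τ) γ (f τ) (δ τ)) lo R
        (Set.range b) := by
  have hE : {e : Fin (n + 1) → α | ∀ i, e i ∈ Set.range b'}.Finite :=
    Set.Finite.pi' fun _ => Set.finite_range b'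
  obtain ⟨ρ, hρ, hρgap⟩ := exists_pos_forall_lt_of_pos (hB.prod (hR.prod hE))
    fun p => p.2.1 - max (f p.1 p.2.2) 0
  have havoid : (t ∪ ⋃ τ ∈ B, Set.range (amin τ)).Finite :=
    ht.union (hB.biUnion fun τ _ => Set.finite_range _)
  choose w hb'w hw hwavoid hwε using fun i =>
    T.exists_succ_notMem_lt (hb' i) (hε ρ hρ) havoid
  set b := Function.extend idx c w with hb_def
  have hb : ∀ i, T.height (b i) = γ + 1 ∧ b i ∉ t ∧ b' i < b i := by
    intro i
    by_cases h : ∃ k, idx k = i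
    · obtain ⟨k, rfl⟩ := h
      rw [hb_def, hidx.extend_apply]
      exact hc k
    · rw [hb_def, Function.extend_apply' _ _ _ h]
      exact ⟨hw i, fun h => hwavoid i (Or.inl h), hb'w i⟩
  refine ⟨b, hb, hidx.extend_apply c w, fun τ hτ => ?_⟩
  obtain ⟨β, haτ, haτinj⟩ := hamin τ hτ
  refine specConsistent_extendToSucc_of_subset_union haτ haτinj hlo hRpos (Y' := Set.range b')
    (W := Set.range w) ?_ (hcons τ hτ) ?_ c
    ((Set.range_extend_subset _ _ _).trans (Set.union_subset_union_right _
      (Set.image_subset_range _ _))) ?_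
    (fun q hq e he hm => hρgap (τ, q, e) ⟨hτ, hq, he⟩ (sub_pos.2 hm)) ?_
  · rintro _ ⟨i, rfl⟩
    exact (hb i).1
  · rintro _ ⟨i, rfl⟩
    exact ⟨i, (T.restrict_eq (hb i).2.2.le (hb' i)).symm⟩
  · rintro _ ⟨i, rfl⟩ hmem
    exact hwavoid i (Or.inr (Set.mem_biUnion hτ hmem))
  · rintro e i ⟨j, hj⟩
    exact (hδε τ e i).trans (hj ▸ hwε j).le

theorem SuitableFamily.extendToSucc (hf : SuitableFamily T amin I γ f)
    (hamin : ∀ τ ∈ I, ∃ β, IsTupleOfHeight T (amin τ) β ∧ Function.Injective (amin τ))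
    {ε : α → ℚ} (hε : ∀ r > 0, {x | T.height x = γ + 1 ∧ r ≤ ε x}.Finite)
    {δ : Ordinal → (Fin (n + 1) → α) → ℚ} (hδε : ∀ τ c i, δ τ c ≤ ε (c i)) :
    SuitableFamily T amin I (γ + 1) fun τ => extendToSucc T (amin τ) γ (f τ) (δ τ) := by
  intro lo hi hlohi hhi B hB hBI R hR hRpos t ht htl l hnl a ha hal idx hidx c hc
  rcases Ordinal.le_add_one_iff.1 hhi with rfl | hhi
  · have hlo : lo ≤ γ := Order.lt_add_one_iff.1 hlohi
    obtain ⟨b', hb', hb'idx, hcons⟩ := hf.exists_extension_to_top hlo hB hBI hR hRpos hnl ha hal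
      hidx (c := c) fun k => ⟨(hc k).1 ▸ le_self_add, (hc k).2.2.le⟩
    obtain ⟨b, hb, hbidx, hbcons⟩ := exists_lift_specConsistent (fun τ hτ => hamin τ (hBI hτ))
      hε hδε hlo hB hR hRpos ht (fun i => (hb' i).1) hcons hidx (c := c) fun k =>
        ⟨(hc k).1, (hc k).2.1,
          hb'idx k ▸ T.restrict_lt _ ((hc k).1 ▸ Order.lt_add_one_iff.2 le_rfl)⟩
    exact ⟨b, fun i => ⟨(hb i).1, (hb i).2.1, (hb' i).2.trans_lt (hb i).2.2⟩, hbidx, hbcons⟩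
  · obtain ⟨b, hb, hbidx, hcons⟩ :=
      hf lo hi hlohi hhi B hB hBI R hR hRpos t ht htl l hnl a ha hal idx hidx c hc
    exact ⟨b, hb, hbidx, fun τ hτ =>
      (hcons τ hτ).extendToSucc (by rintro _ ⟨i, rfl⟩; exact (hb i).1) hlohi.le hhi⟩

end Suitable

theorem suitable_family_one_step_extension_general
    (T : OmegaOneTree α) (n : ℕ)
    (amin : Ordinal → Fin (n + 1) → α)
    (hamin : ∀ τ : Ordinal, τ < omega1 → ∃ β, MinimalTuple T (amin τ) β)
    (γ : Ordinal)
    (I : Set Ordinal) (hI : I ⊆ Set.Iio omega1)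
    (f : Ordinal → (Fin (n + 1) → α) → ℚ)
    (hffam : ∀ τ ∈ I, IsSpecFun T (amin τ) γ (f τ))
    (hfsuit : SuitableFamily T amin I γ f)
    (Q : Set ℚ) (hQfin : Q.Finite) (hQpos : ∀ q ∈ Q, 0 < q)
    (A : Set Ordinal)
    (X : Set α) (hXlev : ∀ x ∈ X, T.height x = γ + 1) :
    ∃ g : Ordinal → (Fin (n + 1) → α) → ℚ,
      (∀ τ ∈ I, IsSpecFun T (amin τ) (γ + 1) (g τ)) ∧
      SuitableFamily T amin I (γ + 1) g ∧
      (∀ τ ∈ I, SpecExtends T (amin τ) γ (f τ) (g τ)) ∧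
      (∀ τ ∈ A, SpecConsistent T (amin τ) (g τ) γ Q X) := by
  obtain ⟨ε, hεpos, hε⟩ := (T.level_countable (γ + 1)).exists_pos_finite_le
  choose δ hδpos hδε hδQ using fun τ (c : Fin (n + 1) → α) =>
    exists_pos_le_forall_add_lt hQfin (max (f τ fun i => T.restrict (c i) γ) 0)
      fun i => hεpos (c i)
  have hamin' : ∀ τ ∈ I, ∃ β, IsTupleOfHeight T (amin τ) β ∧ Function.Injective (amin τ) :=
    fun τ hτ => (hamin τ (hI hτ)).imp fun _ h => ⟨h.1, h.2.1⟩
  exact ⟨fun τ => extendToSucc T (amin τ) γ (f τ) (δ τ),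
    fun τ hτ => isSpecFun_extendToSucc (hffam τ hτ) (hδpos τ),
    hfsuit.extendToSucc hamin' hε hδε,
    fun _ _ => specExtends_extendToSucc,
    fun τ _ => specConsistent_extendToSucc_succ hQpos (hδQ τ) hXlev⟩

/-- Lemma 3.9: a suitable specializing family with top level `γ` extends to a
suitable specializing family with top level `γ+1`, preserving consistency on a
prescribed finite set `X ⊆ T_{γ+1}`. -/
theorem suitable_family_one_step_extension
    (T : OmegaOneTree α) (n : ℕ) (hn : 1 ≤ n)
    (amin : Ordinal → Fin (n + 1) → α)
    (hamin : ∀ τ : Ordinal, τ < omega1 → ∃ β, MinimalTuple T (amin τ) β)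
    (γ : Ordinal) (hγ : γ < omega1)
    (I : Set Ordinal) (hI : I ⊆ Set.Iio omega1) (hIc : I.Countable)
    (f : Ordinal → (Fin (n + 1) → α) → ℚ)
    (hffam : ∀ τ ∈ I, IsSpecFun T (amin τ) γ (f τ))
    (hfsuit : SuitableFamily T amin I γ f)
    (Q : Set ℚ) (hQfin : Q.Finite) (hQpos : ∀ q ∈ Q, 0 < q)
    (A : Set Ordinal) (hAsub : A ⊆ I) (hAfin : A.Finite)
    (X : Set α) (hXfin : X.Finite) (hXlev : ∀ x ∈ X, T.height x = γ + 1)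
    (hXdrop : Set.InjOn (fun x => T.restrict x γ) X) :
    ∃ g : Ordinal → (Fin (n + 1) → α) → ℚ,
      (∀ τ ∈ I, IsSpecFun T (amin τ) (γ + 1) (g τ)) ∧
      SuitableFamily T amin I (γ + 1) g ∧
      (∀ τ ∈ I, SpecExtends T (amin τ) γ (f τ) (g τ)) ∧
      (∀ τ ∈ A, SpecConsistent T (amin τ) (g τ) γ Q X) :=
  suitable_family_one_step_extension_general T n amin hamin γ I hI f hffam hfsuit Q hQfin hQpos A X
    hXlev
end
end

section
/- (Key Property for subtree functions) Let α < β < ω₁. Suppose a_0,…,a_{n-1} are distinct elements of T_α and G = {g_τ : τ ∈ I} is an indexed family of subtree functions on T↾(β+1) such that the family of restrictions {g_τ↾(α+1) : τ ∈ I} is separated on {a_0,…,a_{n-1}}. Let t ⊆ T_β be finite. Then there exist b_0,…,b_{n-1} ∈ T_β \ t such that a_i <_T b_i for all i < n and, for all τ ∈ I, {a_0,…,a_{n-1}} and {b_0,…,b_{n-1}} are g_τ-consistent. -/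
noncomputable section

variable {α : Type} [PartialOrder α]

/-- `g` is a subtree function on `T↾(β+1)` (its values only matter on nodes of
height `≤ β`): it takes value `true` at the root, is downwards closed where it
takes value `true`, and above every node it takes value `true` at infinitely
many nodes of each higher level `≤ β`. -/
def IsSubtreeFun (T : OmegaOneTree α) (β : Ordinal) (g : α → Bool) : Prop :=
  (∀ x : α, T.height x = 0 → g x = true) ∧
  (∀ x : α, T.height x ≤ β → g x = true →
    ∀ γ : Ordinal, γ < T.height x → g (T.restrict x γ) = true) ∧
  (∀ (a : α) (ξ : Ordinal), T.height a < ξ → ξ ≤ β →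
    {b : α | a < b ∧ T.height b = ξ ∧ g b = true}.Infinite)

/-- `g` extends `f` on `T↾(γ+1)` (i.e. `f ⊆ g` for subtree functions). -/
def SubExtends (T : OmegaOneTree α) (γ : Ordinal) (f g : α → Bool) : Prop :=
  ∀ x : α, T.height x ≤ γ → g x = f x

/-- `X↾lo` and `X` are `g`-consistent: for all `x ∈ X`, `g(x↾lo) = 1` iff `g(x) = 1`. -/
def SubConsistent (T : OmegaOneTree α) (g : α → Bool) (lo : Ordinal) (X : Set α) : Prop :=
  ∀ x ∈ X, (g (T.restrict x lo) = true ↔ g x = true)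

/-- The indexed family `{g τ : τ : ι}` is separated on `X`: for every `x ∈ X`
there is at most one index `τ` with `g τ x = 1`. -/
def SubSepOn {ι : Type} (g : ι → α → Bool) (X : Set α) : Prop :=
  ∀ x ∈ X, ∀ τ σ : ι, g τ x = true → g σ x = true → τ = σ

/-!
Each `a i` is treated separately. If some `g τ` takes value `1` at `a i`, separation makes
`τ` unique, and `g τ` takes value `1` at infinitely many nodes of level `hi` above `a i`, so
one of them avoids `t`; every other `g σ` vanishes at `a i`, hence (by downward closure) at any
node above it. If no `g τ` takes value `1` at `a i`, any node of level `hi` above `a i` and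
outside `t` works, and there are infinitely many such nodes because `T` is infinitely splitting.
-/

namespace OmegaOneTree

variable (T : OmegaOneTree α)

lemma exists_le_height_eq {y : α} {β : Ordinal} (hy : T.height y ≤ β) (hβ : β < omega1) :
    ∃ b, y ≤ b ∧ T.height b = β := by
  rcases hy.lt_or_eq with hlt | heq
  · obtain ⟨b, hyb, hb⟩ := T.exists_above y hlt hβ
    exact ⟨b, hyb.le, hb⟩
  · exact ⟨y, le_rfl, heq⟩

lemma infinite_above {x : α} {β : Ordinal} (hx : T.height x < β) (hβ : β < omega1) :
    {b : α | x < b ∧ T.height b = β}.Infinite := by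
  refine ((T.splitting x).mono ?_).of_image (T.restrict · (T.height x + 1))
  rintro y ⟨hxy, hy⟩
  obtain ⟨b, hyb, hb⟩ := T.exists_le_height_eq (hy ▸ Order.add_one_le_iff.mpr hx) hβ
  exact ⟨b, ⟨hxy.trans_le hyb, hb⟩, T.restrict_eq hyb hy⟩

end OmegaOneTree

namespace IsSubtreeFun

variable {T : OmegaOneTree α} {β : Ordinal} {g : α → Bool}

lemma apply_of_lt (hg : IsSubtreeFun T β g) {a b : α} (hab : a < b) (hb : T.height b ≤ β)
    (hgb : g b = true) : g a = true := by
  have := hg.2.1 b hb hgb (T.height a) (T.height_strictMono hab)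
  rwa [T.restrict_eq hab.le rfl] at this

end IsSubtreeFun

lemma exists_above_consistent (T : OmegaOneTree α) {ι : Type} {hi : Ordinal}
    (hhi : hi < omega1) {a : α} (ha : T.height a < hi) (g : ι → α → Bool)
    (hg : ∀ τ, IsSubtreeFun T hi (g τ)) (hsep : ∀ τ σ, g τ a = true → g σ a = true → τ = σ)
    {t : Set α} (ht : t.Finite) :
    ∃ b, T.height b = hi ∧ b ∉ t ∧ a < b ∧ ∀ τ, g τ a = true ↔ g τ b = true := by
  have down_closed : ∀ τ b, T.height b = hi → a < b → g τ b = true → g τ a = true :=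
    fun τ b hb hab => (hg τ).apply_of_lt hab hb.le
  by_cases h : ∃ τ, g τ a = true
  · obtain ⟨τ, hτ⟩ := h
    obtain ⟨b, ⟨hab, hb, hgb⟩, hbt⟩ :=
      ((hg τ).2.2 a hi ha le_rfl).exists_notMem_finite ht
    refine ⟨b, hb, hbt, hab, fun σ => ⟨fun hσ => ?_, down_closed σ b hb hab⟩⟩
    rwa [hsep σ τ hσ hτ]
  · obtain ⟨b, ⟨hab, hb⟩, hbt⟩ := (T.infinite_above ha hhi).exists_notMem_finite ht
    exact ⟨b, hb, hbt, hab, fun σ => ⟨fun hσ => (h ⟨σ, hσ⟩).elim,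
      fun hσ => (h ⟨σ, down_closed σ b hb hab hσ⟩).elim⟩⟩

theorem subtree_key_property_general
    (T : OmegaOneTree α) {ι : Type}
    (lo hi : Ordinal) (hlohi : lo < hi) (hhi : hi < omega1)
    (n : ℕ) (a : Fin n → α)
    (halev : ∀ i, T.height (a i) = lo)
    (g : ι → α → Bool) (hg : ∀ τ, IsSubtreeFun T hi (g τ))
    (hsep : SubSepOn g (Set.range a))
    (t : Set α) (htfin : t.Finite) :
    ∃ b : Fin n → α,
      (∀ i, T.height (b i) = hi ∧ b i ∉ t ∧ a i < b i) ∧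
      ∀ τ : ι, SubConsistent T (g τ) lo (Set.range b) := by
  choose b hb_height hb_t hab hb_consistent using fun i =>
    exists_above_consistent T hhi ((halev i).trans_lt hlohi) g hg (hsep (a i) ⟨i, rfl⟩) htfin
  refine ⟨b, fun i => ⟨hb_height i, hb_t i, hab i⟩, ?_⟩
  rintro τ _ ⟨i, rfl⟩
  rw [T.restrict_eq (hab i).le (halev i)]
  exact hb_consistent i τ

/-- Proposition 4.6 (Key Property for subtree functions). -/
theorem subtree_key_property
    (T : OmegaOneTree α) {ι : Type}
    (lo hi : Ordinal) (hlohi : lo < hi) (hhi : hi < omega1)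
    (n : ℕ) (a : Fin n → α) (hainj : Function.Injective a)
    (halev : ∀ i, T.height (a i) = lo)
    (g : ι → α → Bool) (hg : ∀ τ, IsSubtreeFun T hi (g τ))
    (hsep : SubSepOn g (Set.range a))
    (t : Set α) (htfin : t.Finite) (htlev : ∀ x ∈ t, T.height x = hi) :
    ∃ b : Fin n → α,
      (∀ i, T.height (b i) = hi ∧ b i ∉ t ∧ a i < b i) ∧
      ∀ τ : ι, SubConsistent T (g τ) lo (Set.range b) :=
  subtree_key_property_general T lo hi hlohi hhi n a halev g hg hsep t htfin
end
end

section
/- Assume CH (2^ℵ₀ = ℵ₁). Then the subtree forcing poset ℙ is ω₂-c.c.: every antichain of ℙ has cardinality less than ℵ₂. -/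
noncomputable section

variable {α : Type} [PartialOrder α]

/-- A condition of the subtree forcing `ℙ`: a function with countable domain
contained in `κ`, assigning to each index in its domain a subtree function on
`T↾(top+1)` for a common top level `top < ω₁`. -/
structure SubtreeCond (T : OmegaOneTree α) (κ : Ordinal) where
  dom : Set Ordinal
  dom_sub : dom ⊆ Set.Iio κ
  dom_countable : dom.Countable
  top : Ordinal
  top_lt : top < omega1
  fn : Ordinal → α → Bool
  fn_subtree : ∀ τ ∈ dom, IsSubtreeFun T top (fn τ)

/-- The order on the subtree forcing: `q ≤ p` iff `dom p ⊆ dom q` and for every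
`τ ∈ dom p`, `q(τ)` extends `p(τ)` as a subtree function. -/
def SubtreeCondLE {T : OmegaOneTree α} {κ : Ordinal} (q p : SubtreeCond T κ) : Prop :=
  p.dom ⊆ q.dom ∧ p.top ≤ q.top ∧
    ∀ τ ∈ p.dom, ∀ x : α, T.height x ≤ p.top → q.fn τ x = p.fn τ x

/-- Compatibility in the subtree forcing. -/
def SubtreeCompatible {T : OmegaOneTree α} {κ : Ordinal} (p q : SubtreeCond T κ) : Prop :=
  ∃ r : SubtreeCond T κ, SubtreeCondLE r p ∧ SubtreeCondLE r q


/-!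
Two conditions with the same top level `β` are compatible as soon as they agree on the common
part of their domains. So an antichain of conditions with top `β` is a family of pairwise
conflicting countable partial functions from `κ` to the set of `{0,1}`-valued functions on
`T↾(β+1)`, a set of size `2^ℵ₀ = ℵ₁`, and there are only `ℵ₁` possible tops.

Under CH such a family has at most `ℵ₁` members. Otherwise take `ℵ₂` of them, move their domains
into `ω₂` and find `β₀` such that for every `γ` more than `ℵ₁` members avoid `[β₀, γ)`. Colour
each member by its restriction below `β₀`; there are only `ℵ₁^ℵ₀ = ℵ₁` colours. A member whose
domain lies below `γ` and a member of the same colour avoiding `[β₀, γ)` can only meet below `β₀`,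
where they agree.
-/

open Cardinal Set Function

universe u v

namespace Cardinal

theorem continuum_eq_aleph_one_univ (hCH : (𝔠 : Cardinal.{u}) = ℵ₁) :
    (𝔠 : Cardinal.{v}) = ℵ₁ := by
  rw [← lift_continuum.{u, 0}, lift_eq_aleph_one] at hCH
  rw [← lift_continuum.{v, 0}, lift_eq_aleph_one, hCH]

theorem aleph_one_lt_aleph_two : (ℵ₁ : Cardinal.{u}) < ℵ_ 2 :=
  aleph_lt_aleph.2 (by norm_num)

theorem aleph_two_eq_succ_aleph_one : (ℵ_ 2 : Cardinal.{u}) = Order.succ ℵ₁ := by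
  rw [succ_aleph]; norm_num

theorem cof_aleph_two_ord_toType : Order.cof (ℵ_ 2 : Cardinal.{u}).ord.ToType = ℵ_ 2 := by
  rw [Ordinal.cof_toType, ← one_add_one_eq_two]
  exact (isRegular_aleph_add_one 1).cof_ord

theorem mk_Iio_aleph_two_ord_toType_le (b : (ℵ_ 2 : Cardinal.{u}).ord.ToType) :
    #(Iio b) ≤ ℵ₁ := by
  rw [← Order.lt_succ_iff, ← aleph_two_eq_succ_aleph_one]
  simpa using mk_Iio_lt b (by simp)

theorem mk_iUnion_le_aleph_one {ι X : Type u} (s : ι → Set X) (hι : #ι ≤ ℵ₁)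
    (hs : ∀ i, #(s i) ≤ ℵ₁) : #(⋃ i, s i) ≤ ℵ₁ :=
  calc #(⋃ i, s i) ≤ #ι * ⨆ i, #(s i) := mk_iUnion_le s
    _ ≤ ℵ₁ * ℵ₁ := mul_le_mul' hι (ciSup_le' hs)
    _ = ℵ₁ := mul_eq_self (aleph0_le_aleph 1)

theorem mk_le_of_pairwise_disjoint_of_inter_nonempty {ι X : Type u} {s : Set X}
    {I : ι → Set X} (hI : Pairwise (Disjoint on I)) (hs : ∀ i, (s ∩ I i).Nonempty) :
    #ι ≤ #s := by
  choose x hx using hs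
  refine mk_le_of_injective (f := fun i => (⟨x i, (hx i).1⟩ : s)) fun i j hij => ?_
  have hxij : x i = x j := congrArg Subtype.val hij
  by_contra hne
  exact (hI hne).ne_of_mem (hx i).2 (hx j).2 hxij

theorem mk_bounded_set_aleph0_le_aleph_one {X : Type u} (hCH : (𝔠 : Cardinal.{u}) = ℵ₁)
    (hX : #X ≤ ℵ₁) : #{s : Set X // #s ≤ ℵ₀} ≤ ℵ₁ :=
  calc #{s : Set X // #s ≤ ℵ₀} ≤ max #X ℵ₀ ^ ℵ₀ := mk_bounded_set_le X ℵ₀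
    _ ≤ ℵ₁ ^ ℵ₀ := power_le_power_right (max_le hX (aleph0_le_aleph 1))
    _ = ℵ₁ := by rw [← hCH, continuum_power_aleph0]

end Cardinal

section CountableDomains

variable {K : Type u} [LinearOrder K]

theorem exists_forall_lt_of_mk_lt_cof {s : Set K} (hs : #s < Order.cof K) :
    ∃ b, ∀ x ∈ s, x < b := by
  by_contra! h
  exact (Order.cof_le h).not_gt hs

theorem exists_apply_le_of_lt_of_mk_Iio_lt_cof {J : Type u} [LinearOrder J] [WellFoundedLT J]
    (hJ : ∀ t : J, #(Iio t) < Order.cof K) (g : K → K) :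
    ∃ f : J → K, ∀ s t, s < t → g (f s) ≤ f t := by
  choose b hb using fun (t : J) (h : Iio t → K) =>
    exists_forall_lt_of_mk_lt_cof (mk_range_le.trans_lt (hJ t) : #(range h) < _)
  let f : J → K := wellFounded_lt.fix fun t IH => b t fun s => g (IH s.1 s.2)
  refine ⟨f, fun s t hst => ?_⟩
  have hf : f t = b t fun s => g (f s.1) := wellFounded_lt.fix_eq _ t
  rw [hf]
  exact (hb t (fun s => g (f s.1)) _ ⟨⟨s, hst⟩, rfl⟩).le

variable {ι : Type u} {d : ι → Set K}

theorem exists_forall_aleph_one_lt_mk_disjoint_Ico (hK : ℵ₁ < Order.cof K)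
    (hd : ∀ i, (d i).Countable) (hι : ℵ₁ < #ι) :
    ∃ β, ∀ γ, ℵ₁ < #{i | Disjoint (d i) (Ico β γ)} := by
  by_contra! h
  choose g hg using h
  -- An `ω₁`-sequence of pairwise disjoint intervals `[f t, g (f t))`, each avoided by only
  -- `ℵ₁` of the countable sets `d i`: some `d i` meets all of them.
  obtain ⟨f, hf⟩ := exists_apply_le_of_lt_of_mk_Iio_lt_cof
    (J := (ℵ₁ : Cardinal.{u}).ord.ToType)
    (fun t => ((mk_Iio_lt t (by simp)).trans_eq (mk_ord_toType _)).trans hK) g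
  let I t := Ico (f t) (g (f t))
  have hI_lt : ∀ s t, s < t → Disjoint (I s) (I t) := fun s t hst =>
    disjoint_left.2 fun x hxs hxt => (hxs.2.trans_le (hf s t hst)).not_ge hxt.1
  have hI : Pairwise (Disjoint on I) := fun s t hst =>
    hst.lt_or_gt.elim (hI_lt s t) fun h => (hI_lt t s h).symm
  obtain ⟨i, hi⟩ : ∃ i, i ∉ ⋃ t, {i | Disjoint (d i) (I t)} := by
    by_contra! h
    refine hι.not_ge ?_
    rw [← mk_univ, ← eq_univ_of_forall h]
    exact mk_iUnion_le_aleph_one _ (mk_ord_toType _).le fun t => hg _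
  simp only [mem_iUnion, not_exists] at hi
  have hdi : ℵ₁ ≤ #(d i) := (mk_ord_toType _).symm.le.trans
    (mk_le_of_pairwise_disjoint_of_inter_nonempty hI fun t =>
      not_disjoint_iff_nonempty_inter.1 (hi t))
  exact (hdi.trans (le_aleph0_iff_set_countable.2 (hd i))).not_gt aleph0_lt_aleph_one

theorem exists_ne_eq_inter_subset_Iio (hK : ℵ₁ < Order.cof K) (hd : ∀ i, (d i).Countable)
    {β : K} (hβ : ∀ γ, ℵ₁ < #{i | Disjoint (d i) (Ico β γ)}) {C : Type u} (hC : #C ≤ ℵ₁)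
    (c : ι → C) : ∃ i j, i ≠ j ∧ c i = c j ∧ d i ∩ d j ⊆ Iio β := by
  -- `R` holds one member of each colour; any `j ∉ R` avoiding `[β, γ)` pairs with the
  -- representative of its colour.
  set R := range (rangeSplitting c)
  have hR : #R ≤ ℵ₁ := mk_range_le.trans ((mk_set_le _).trans hC)
  obtain ⟨γ, hγ⟩ := exists_forall_lt_of_mk_lt_cof <| (mk_iUnion_le_aleph_one (fun r : R => d r) hR
    fun r => (le_aleph0_iff_set_countable.2 (hd r)).trans (aleph0_le_aleph 1)).trans_lt hK
  obtain ⟨j, hjγ, hjR⟩ : ∃ j ∈ {i | Disjoint (d i) (Ico β γ)}, j ∉ R := by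
    by_contra! h
    exact (hβ γ).not_ge ((mk_le_mk_of_subset h).trans hR)
  set i := rangeSplitting c ⟨c j, mem_range_self j⟩
  refine ⟨i, j, fun h => hjR (h ▸ mem_range_self _), apply_rangeSplitting c _,
    fun τ ⟨hτi, hτj⟩ => ?_⟩
  have hτγ : τ < γ := hγ τ (mem_iUnion.2 ⟨⟨i, mem_range_self _⟩, hτi⟩)
  by_contra hτβ
  exact hjγ.ne_of_mem hτj ⟨not_lt.1 hτβ, hτγ⟩ rfl

theorem exists_ne_eqOn_inter_of_aleph_one_lt_cof (hCH : (𝔠 : Cardinal.{u}) = ℵ₁)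
    (hK : ℵ₁ < Order.cof K) (hIio : ∀ b : K, #(Iio b) ≤ ℵ₁) (hd : ∀ i, (d i).Countable)
    (hι : ℵ₁ < #ι) {V : Type u} (hV : #V ≤ ℵ₁) (f : ι → K → V) :
    ∃ i j, i ≠ j ∧ EqOn (f i) (f j) (d i ∩ d j) := by
  obtain ⟨β, hβ⟩ := exists_forall_aleph_one_lt_mk_disjoint_Ico hK hd hι
  let c (i : ι) : {s : Set (Iio β × V) // #s ≤ ℵ₀} :=
    ⟨(fun τ => (τ, f i τ)) '' (Subtype.val ⁻¹' d i),
      le_aleph0_iff_set_countable.2 (((hd i).preimage Subtype.val_injective).image _)⟩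
  have hC := mk_bounded_set_aleph0_le_aleph_one (X := Iio β × V) hCH <| by
    rw [mk_prod, lift_id, lift_id]
    exact (mul_le_mul' (hIio β) hV).trans (mul_eq_self (aleph0_le_aleph 1)).le
  obtain ⟨i, j, hij, hc, hsub⟩ := exists_ne_eq_inter_subset_Iio hK hd hβ hC c
  refine ⟨i, j, hij, fun τ hτ => ?_⟩
  have hmem : ((⟨τ, hsub hτ⟩ : Iio β), f i τ) ∈ (c j).1 := hc ▸ ⟨_, hτ.1, rfl⟩
  obtain ⟨σ, -, hσ⟩ := hmem
  simp only [Prod.mk.injEq] at hσ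
  obtain ⟨rfl, h⟩ := hσ
  exact h.symm

end CountableDomains

theorem Cardinal.mk_le_aleph_one_of_pairwise_not_eqOn {ι K V : Type u}
    (hCH : (𝔠 : Cardinal.{u}) = ℵ₁) (hV : #V ≤ ℵ₁) (d : ι → Set K) (hd : ∀ i, (d i).Countable)
    (f : ι → K → V) (hf : Pairwise fun i j => ¬ EqOn (f i) (f j) (d i ∩ d j)) : #ι ≤ ℵ₁ := by
  by_contra! hι
  obtain ⟨v₀⟩ : Nonempty V := by
    have h1 : 1 < #ι := (one_lt_aleph0.trans aleph0_lt_aleph_one).trans hι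
    obtain ⟨i, j, hij⟩ := (one_lt_iff_nontrivial.1 h1).exists_pair_ne
    obtain ⟨τ, -⟩ := not_forall.1 (hf hij)
    exact ⟨f i τ⟩
  -- Keep `ℵ₂` members, indexed by `W = ω₂`, and relabel the union of their domains inside `W`.
  let W := (ℵ_ 2 : Cardinal.{u}).ord.ToType
  obtain ⟨e⟩ : Nonempty (W ↪ ι) := by
    rw [← le_def, mk_ord_toType, aleph_two_eq_succ_aleph_one]
    exact Order.succ_le_of_lt hι
  let U := ⋃ w, d (e w)
  obtain ⟨φ⟩ : Nonempty (U ↪ W) := by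
    have hW : ℵ₀ ≤ #W := by rw [mk_ord_toType]; exact aleph0_le_aleph 2
    rw [← le_def]
    calc #U ≤ #W * ⨆ w, #(d (e w)) := mk_iUnion_le _
      _ ≤ #W * #W := mul_le_mul' le_rfl (ciSup_le' fun w =>
          (le_aleph0_iff_set_countable.2 (hd (e w))).trans hW)
      _ = #W := mul_eq_self hW
  obtain ⟨w₁, w₂, hw, hagree⟩ := exists_ne_eqOn_inter_of_aleph_one_lt_cof
    (d := fun w => φ '' (Subtype.val ⁻¹' d (e w))) hCH
    (cof_aleph_two_ord_toType.symm ▸ aleph_one_lt_aleph_two) mk_Iio_aleph_two_ord_toType_le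
    (fun w => ((hd (e w)).preimage Subtype.val_injective).image _)
    (by rw [mk_ord_toType]; exact aleph_one_lt_aleph_two) hV
    (fun w => extend φ (fun u => f (e w) u) fun _ => v₀)
  refine hf (e.injective.ne hw) fun τ hτ => ?_
  let u : U := ⟨τ, mem_iUnion.2 ⟨w₁, hτ.1⟩⟩
  simpa only [φ.injective.extend_apply] using hagree ⟨⟨u, hτ.1, rfl⟩, ⟨u, hτ.2, rfl⟩⟩

theorem OmegaOneTree.countable_setOf_height_le (T : OmegaOneTree α) {β : Ordinal}
    (hβ : β < omega1) : {x | T.height x ≤ β}.Countable := by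
  have hIic : (Iic β).Countable := by
    rw [← le_aleph0_iff_set_countable, ← Order.Iio_succ, mk_Iio_ordinal, lift_le_aleph0,
      ← lt_aleph_one_iff, ← lt_ord]
    exact (isSuccLimit_ord (aleph0_le_aleph 1)).succ_lt hβ
  have : {x | T.height x ≤ β} = ⋃ γ ∈ Iic β, {x | T.height x = γ} := by ext; simp
  rw [this]
  exact hIic.biUnion fun γ _ => T.level_countable γ

theorem subtreeCompatible_of_top_eq_of_forall_eq {T : OmegaOneTree α} {κ : Ordinal}
    {p q : SubtreeCond T κ} (htop : p.top = q.top)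
    (h : ∀ τ ∈ p.dom ∩ q.dom, ∀ x, T.height x ≤ p.top → p.fn τ x = q.fn τ x) :
    SubtreeCompatible p q := by
  classical
  refine ⟨⟨p.dom ∪ q.dom, union_subset p.dom_sub q.dom_sub,
    p.dom_countable.union q.dom_countable, p.top, p.top_lt,
    fun τ => if τ ∈ p.dom then p.fn τ else q.fn τ, ?_⟩, ?_, ?_⟩
  · rintro τ (hp | hq)
    · simpa [hp] using p.fn_subtree τ hp
    · by_cases hp : τ ∈ p.dom
      · simpa [hp] using p.fn_subtree τ hp
      · simpa [hp, htop] using q.fn_subtree τ hq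
  · exact ⟨subset_union_left, le_rfl, fun τ hτ x _ => by simp [hτ]⟩
  · refine ⟨subset_union_right, htop.ge, fun τ hτ x hx => ?_⟩
    by_cases hp : τ ∈ p.dom
    · simpa [hp] using h τ ⟨hp, hτ⟩ x (htop ▸ hx)
    · simp [hp]

namespace SubtreeCond

theorem mk_le_aleph_one_of_top_eq {T : OmegaOneTree α} {κ : Ordinal.{v}}
    (hCH : (𝔠 : Cardinal.{v + 1}) = ℵ₁) {β : Ordinal} (hβ : β < omega1)
    (s : Set (SubtreeCond T κ)) (hs : ∀ p ∈ s, p.top = β)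
    (hanti : s.Pairwise fun p q => ¬ SubtreeCompatible p q) : #s ≤ ℵ₁ := by
  let V := ULift.{v + 1} ({x // T.height x ≤ β} → Bool)
  have hV : #V ≤ ℵ₁ := by
    have hS : #{x // T.height x ≤ β} ≤ ℵ₀ :=
      le_aleph0_iff_set_countable.2 (T.countable_setOf_height_le hβ)
    rw [← hCH, ← two_power_aleph0, mk_uLift]
    simpa using power_le_power_left two_ne_zero (lift_le_aleph0.2 hS)
  refine mk_le_aleph_one_of_pairwise_not_eqOn hCH hV (fun p => p.1.dom) (fun p => p.1.dom_countable)
    (fun p τ => ⟨fun x => p.1.fn τ x⟩) fun p q hpq hagree => ?_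
  refine hanti p.2 q.2 (Subtype.coe_ne_coe.2 hpq) (subtreeCompatible_of_top_eq_of_forall_eq ?_ ?_)
  · rw [hs _ p.2, hs _ q.2]
  · intro τ hτ x hx
    exact congrArg (fun g : V => g.down ⟨x, hs _ p.2 ▸ hx⟩) (hagree hτ)

theorem mk_antichain_le_aleph_one {T : OmegaOneTree α} {κ : Ordinal.{v}}
    (hCH : (𝔠 : Cardinal.{v + 1}) = ℵ₁) (A : Set (SubtreeCond T κ))
    (hanti : A.Pairwise fun p q => ¬ SubtreeCompatible p q) : #A ≤ ℵ₁ :=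
  calc #A ≤ #(⋃ b : ULift.{v + 1} (Iio omega1), {p ∈ A | p.top = b.down}) :=
        mk_le_mk_of_subset fun p hp => mem_iUnion.2 ⟨⟨⟨p.top, p.top_lt⟩⟩, hp, rfl⟩
    _ ≤ ℵ₁ := mk_iUnion_le_aleph_one _ (by simp [mk_Iio_ordinal, omega1])
        fun b : ULift.{v + 1} (Iio omega1) => mk_le_aleph_one_of_top_eq hCH b.down.2 _
          (fun _ hp => hp.2) (hanti.mono inter_subset_left)

end SubtreeCond

theorem subtree_forcing_omega2_cc_general
    (T : OmegaOneTree α) (κ : Ordinal)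
    (hCH : (2 : Cardinal.{1}) ^ (Cardinal.aleph0 : Cardinal.{1}) = Cardinal.aleph 1)
    (A : Set (SubtreeCond T κ))
    (hanti : ∀ p ∈ A, ∀ q ∈ A, p ≠ q → ¬ SubtreeCompatible p q) :
    Cardinal.mk ↥A < Cardinal.aleph 2 := by
  rw [two_power_aleph0] at hCH
  exact (SubtreeCond.mk_antichain_le_aleph_one (continuum_eq_aleph_one_univ hCH) A
    hanti).trans_lt aleph_one_lt_aleph_two

/-- Proposition 4.22: assuming CH, the subtree forcing `ℙ` is `ω₂`-c.c.:
every antichain has cardinality less than `ℵ₂`. -/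
theorem subtree_forcing_omega2_cc
    (T : OmegaOneTree α) (κ : Ordinal) (hκ : 0 < κ)
    (hCH : (2 : Cardinal.{1}) ^ (Cardinal.aleph0 : Cardinal.{1}) = Cardinal.aleph 1)
    (A : Set (SubtreeCond T κ))
    (hanti : ∀ p ∈ A, ∀ q ∈ A, p ≠ q → ¬ SubtreeCompatible p q) :
    Cardinal.mk ↥A < Cardinal.aleph 2 :=
  subtree_forcing_omega2_cc_general T κ hCH A hanti
end
end

section
/- (1-Key Property for automorphisms) Let α < β < ω₁. Suppose a_0,…,a_{n-1} are distinct elements of T_α and G = {g_τ : τ ∈ A} is a finite indexed family of automorphisms of T↾(β+1) such that the family of restrictions {g_τ↾(α+1) : τ ∈ A} is separated on (a_0,…,a_{n-1}). Let n̄ < n and fix b ∈ T_β with a_{n̄} <_T b. Then there exist b_0,…,b_{n-1} ∈ T_β such that a_i <_T b_i for all i < n, b_{n̄} = b, and for all τ ∈ A, (a_0,…,a_{n-1}) and (b_0,…,b_{n-1}) are g_τ-consistent. -/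
noncomputable section

variable {α : Type} [PartialOrder α]

/-- The pair `(g, g')` is an automorphism of `T↾(β+1)` together with its inverse:
both are level preserving on `T↾(β+1)`, mutually inverse there, and strictly
increasing there (hence `g` is an order isomorphism of `T↾(β+1)` onto itself). -/
def IsTreeAuto (T : OmegaOneTree α) (β : Ordinal) (g g' : α → α) : Prop :=
  (∀ x : α, T.height x ≤ β → T.height (g x) = T.height x) ∧
  (∀ x : α, T.height x ≤ β → T.height (g' x) = T.height x) ∧
  (∀ x : α, T.height x ≤ β → g' (g x) = x) ∧
  (∀ x : α, T.height x ≤ β → g (g' x) = x) ∧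
  (∀ x y : α, T.height y ≤ β → x < y → g x < g y) ∧
  (∀ x y : α, T.height y ≤ β → x < y → g' x < g' y)

/-- `(g, g')` extends `(f, f')` on `T↾(γ+1)` (i.e. `f ⊆ g` for automorphisms). -/
def AutoExtends (T : OmegaOneTree α) (γ : Ordinal) (f f' g g' : α → α) : Prop :=
  (∀ x : α, T.height x ≤ γ → g x = f x) ∧ (∀ x : α, T.height x ≤ γ → g' x = f' x)

/-- `X↾lo` and `X` are `g`-consistent: for all `x, y ∈ X`,
`g(x↾lo) = y↾lo` iff `g(x) = y`. -/
def AutoConsistentSet (T : OmegaOneTree α) (g : α → α) (lo : Ordinal) (X : Set α) : Prop :=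
  ∀ x ∈ X, ∀ y ∈ X, (g (T.restrict x lo) = T.restrict y lo ↔ g x = y)

/-- The tuples `a` and `b` (with `a = b↾lo` componentwise) are `g`-consistent:
for all `i, j`, `g(a i) = a j` iff `g(b i) = b j`. -/
def AutoConsistentPair (g : α → α) {n : ℕ} (a b : Fin n → α) : Prop :=
  ∀ i j : Fin n, (g (a i) = a j ↔ g (b i) = b j)

/-- The indexed family of automorphisms `(g, g')` is separated on the injective
tuple `a`: no member of the tuple satisfies a relation with itself, and each
member satisfies at most one relation `g_τ^m(a k) = a i` with earlier members. -/
def AutoSepTuple {ι : Type} (g g' : ι → α → α) {n : ℕ} (a : Fin n → α) : Prop :=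
  (∀ (k : Fin n) (τ : ι), g τ (a k) ≠ a k) ∧
  ∀ (k i₁ i₂ : Fin n) (m₁ m₂ : Bool) (τ₁ τ₂ : ι), i₁ < k → i₂ < k →
    cond m₁ (g τ₁ (a k)) (g' τ₁ (a k)) = a i₁ →
    cond m₂ (g τ₂ (a k)) (g' τ₂ (a k)) = a i₂ →
    i₁ = i₂ ∧ m₁ = m₂ ∧ τ₁ = τ₂

/-- The indexed family of automorphisms `(g, g')` is separated on the finite set
`X`: some injective tuple listing the elements of `X` witnesses separation. -/
def AutoSepSet {ι : Type} (g g' : ι → α → α) (X : Set α) : Prop :=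
  ∃ (n : ℕ) (a : Fin n → α), Function.Injective a ∧ Set.range a = X ∧ AutoSepTuple g g' a

/-- The indexed family of automorphisms `(g, g')` of `T↾(β+1)` is separated:
it is separated on every finite subset of the level `T_β`. -/
def AutoSeparated (T : OmegaOneTree α) (β : Ordinal) {ι : Type} (g g' : ι → α → α) : Prop :=
  ∀ X : Set α, X.Finite → (∀ x ∈ X, T.height x = β) → AutoSepSet g g' X

/-!
Add the entries of `a` one at a time. By separation the newest entry `a k` has at most one link
`g_τ^m (a k) = a i` with `i < k`; if it has one, lift `a k` to `g_τ^{-m}` of the lift of `a i`,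
otherwise to any node above it. If `b` is prescribed above the newest entry, first push it along
the link to `g_τ^m b` above `a i`. A lift carrying all links over is consistent: a relation
`g_τ (a i) = a j` is a link from `a i` or, through `g_τ⁻¹`, from `a j`; conversely
`g_τ (bb i) = bb j` restricts to `g_τ (a i) = a j`.
-/

theorem OmegaOneTree.eq_of_le_of_le_of_height_eq_s11 {T : OmegaOneTree α} {x y z : α}
    (hx : x ≤ z) (hy : y ≤ z) (hxy : T.height x = T.height y) : x = y :=
  (T.restrict_eq hx hxy).symm.trans (T.restrict_eq hy rfl)

namespace IsTreeAuto

variable {T : OmegaOneTree α} {β : Ordinal} {g g' : α → α} {x y : α}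

theorem height_eq (h : IsTreeAuto T β g g') (hx : T.height x ≤ β) :
    T.height (g x) = T.height x :=
  h.1 x hx

theorem left_inv (h : IsTreeAuto T β g g') (hx : T.height x ≤ β) : g' (g x) = x :=
  h.2.2.1 x hx

theorem right_inv (h : IsTreeAuto T β g g') (hx : T.height x ≤ β) : g (g' x) = x :=
  h.2.2.2.1 x hx

theorem map_lt (h : IsTreeAuto T β g g') (hy : T.height y ≤ β) (hxy : x < y) : g x < g y :=
  h.2.2.2.2.1 x y hy hxy

theorem symm (h : IsTreeAuto T β g g') : IsTreeAuto T β g' g :=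
  ⟨h.2.1, h.1, h.2.2.2.1, h.2.2.1, h.2.2.2.2.2, h.2.2.2.2.1⟩

theorem cond (h : IsTreeAuto T β g g') (m : Bool) :
    IsTreeAuto T β (fun x => cond m (g x) (g' x)) (fun x => cond m (g' x) (g x)) := by
  cases m
  exacts [h.symm, h]

end IsTreeAuto

section Lift

variable {T : OmegaOneTree α} {lo hi : Ordinal} {ι : Type} {g g' : ι → α → α} {n : ℕ}

structure IsLift (T : OmegaOneTree α) (hi : Ordinal) (g g' : ι → α → α) (a bb : Fin n → α) :
    Prop where
  height_eq : ∀ i, T.height (bb i) = hi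
  lt : ∀ i, a i < bb i
  map_link : ∀ (i k : Fin n) (m : Bool) (τ : ι), i < k →
    cond m (g τ (a k)) (g' τ (a k)) = a i → cond m (g τ (bb k)) (g' τ (bb k)) = bb i

theorem IsLift.of_isEmpty [IsEmpty (Fin n)] (a bb : Fin n → α) : IsLift T hi g g' a bb :=
  ⟨isEmptyElim, isEmptyElim, isEmptyElim⟩

theorem IsLift.snoc {a : Fin (n + 1) → α} {bb : Fin n → α} {c : α}
    (h : IsLift T hi g g' (Fin.init a) bb) (hc : T.height c = hi) (hac : a (Fin.last n) < c)
    (hlink : ∀ i m τ, cond m (g τ (a (Fin.last n))) (g' τ (a (Fin.last n))) = a i.castSucc →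
      cond m (g τ c) (g' τ c) = bb i) :
    IsLift T hi g g' a (Fin.snoc (α := fun _ => α) bb c) where
  height_eq i := by
    cases i using Fin.lastCases
    · simpa using hc
    · simpa using h.height_eq _
  lt i := by
    cases i using Fin.lastCases
    · simpa using hac
    · simp only [Fin.snoc_castSucc]
      exact h.lt _
  map_link i k m τ hik := by
    cases k using Fin.lastCases with
    | last =>
      obtain ⟨i, rfl⟩ := Fin.exists_castSucc_eq.mpr hik.ne
      simpa using hlink i m τ
    | cast k =>
      obtain ⟨i, rfl⟩ := Fin.exists_castSucc_eq.mpr (hik.trans k.castSucc_lt_last).ne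
      simp only [Fin.snoc_castSucc]
      exact h.map_link i k m τ (Fin.castSucc_lt_castSucc_iff.mp hik)

theorem IsLift.autoConsistentPair {a bb : Fin n → α} {τ : ι} (h : IsLift T hi g g' a bb)
    (hlohi : lo ≤ hi) (halev : ∀ i, T.height (a i) = lo) (hg : IsTreeAuto T hi (g τ) (g' τ))
    (hfix : ∀ k, g τ (a k) ≠ a k) : AutoConsistentPair (g τ) a bb := by
  have ha : ∀ i, T.height (a i) ≤ hi := fun i => (halev i).trans_le hlohi
  have hbb : ∀ i, T.height (bb i) ≤ hi := fun i => (h.height_eq i).le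
  intro i j
  constructor
  · intro hij
    rcases lt_trichotomy i j with hlt | rfl | hgt
    · have hinv : g' τ (a j) = a i := by rw [← hij, hg.left_inv (ha i)]
      have hlift : g' τ (bb j) = bb i := h.map_link i j false τ hlt hinv
      rw [← hlift, hg.right_inv (hbb j)]
    · exact absurd hij (hfix i)
    · exact h.map_link j i true τ hgt hij
  · intro hij
    have hlt : g τ (a i) < bb j := hij ▸ hg.map_lt (hbb i) (h.lt i)
    refine T.eq_of_le_of_le_of_height_eq_s11 hlt.le (h.lt j).le ?_
    rw [hg.height_eq (ha i), halev, halev]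

omit [PartialOrder α] in
theorem AutoSepTuple.init {a : Fin (n + 1) → α} (hsep : AutoSepTuple g g' a) :
    AutoSepTuple g g' (Fin.init a) := by
  refine ⟨fun k τ => hsep.1 k.castSucc τ, fun k i₁ i₂ m₁ m₂ τ₁ τ₂ h₁ h₂ e₁ e₂ => ?_⟩
  obtain ⟨hidx, hm, hτ⟩ := hsep.2 k.castSucc i₁.castSucc i₂.castSucc m₁ m₂ τ₁ τ₂
    (Fin.castSucc_lt_castSucc_iff.mpr h₁) (Fin.castSucc_lt_castSucc_iff.mpr h₂) e₁ e₂
  exact ⟨Fin.castSucc_injective n hidx, hm, hτ⟩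

def PointedLiftable (T : OmegaOneTree α) (lo hi : Ordinal) (g g' : ι → α → α) (n : ℕ) : Prop :=
  ∀ a : Fin n → α, (∀ i, T.height (a i) = lo) → AutoSepTuple g g' a →
    ∀ (nbar : Fin n) (b : α), T.height b = hi → a nbar < b →
      ∃ bb, IsLift T hi g g' a bb ∧ bb nbar = b

namespace PointedLiftable

theorem zero : PointedLiftable T lo hi g g' 0 :=
  fun _ _ _ nbar => nbar.elim0

theorem exists_isLift (h : PointedLiftable T lo hi g g' n) (hlohi : lo < hi) (hhi : hi < omega1)
    {a : Fin n → α} (halev : ∀ i, T.height (a i) = lo) (hsep : AutoSepTuple g g' a) :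
    ∃ bb, IsLift T hi g g' a bb := by
  rcases isEmpty_or_nonempty (Fin n) with _ | ⟨⟨j⟩⟩
  · exact ⟨a, IsLift.of_isEmpty a a⟩
  · obtain ⟨c, hac, hc⟩ := T.exists_above (a j) ((halev j).trans_lt hlohi) hhi
    obtain ⟨bb, hbb, -⟩ := h a halev hsep j c hc hac
    exact ⟨bb, hbb⟩

theorem succ_of_link (ih : PointedLiftable T lo hi g g' n)
    (hlohi : lo ≤ hi) (hg : ∀ τ, IsTreeAuto T hi (g τ) (g' τ)) {a : Fin (n + 1) → α}
    (halev : ∀ i, T.height (a i) = lo) (hsep : AutoSepTuple g g' a) {i : Fin n} {m : Bool}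
    {τ : ι} (hlink : cond m (g τ (a (Fin.last n))) (g' τ (a (Fin.last n))) = a i.castSucc)
    (nbar : Fin (n + 1)) (b : α) (hb : T.height b = hi) (hab : a nbar < b) :
    ∃ bb, IsLift T hi g g' a bb ∧ bb nbar = b := by
  have hf := (hg τ).cond m
  have hsnoc : ∀ bb, IsLift T hi g g' (Fin.init a) bb → ∀ c, T.height c = hi →
      a (Fin.last n) < c → cond m (g τ c) (g' τ c) = bb i →
      IsLift T hi g g' a (Fin.snoc (α := fun _ => α) bb c) := by
    refine fun bb hbb c hc hac hci => hbb.snoc hc hac fun i' m' τ' hlink' => ?_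
    obtain ⟨hidx, rfl, rfl⟩ := hsep.2 _ _ _ m' m τ' τ (Fin.castSucc_lt_last i')
      (Fin.castSucc_lt_last i) hlink' hlink
    rwa [Fin.castSucc_injective n hidx]
  cases nbar using Fin.lastCases with
  | last =>
    have hfb : a i.castSucc < cond m (g τ b) (g' τ b) := hlink ▸ hf.map_lt hb.le hab
    obtain ⟨bb, hbb, hbi⟩ := ih (Fin.init a) (fun j => halev j.castSucc) hsep.init i
      (cond m (g τ b) (g' τ b)) ((hf.height_eq hb.le).trans hb) hfb
    exact ⟨_, hsnoc bb hbb b hb hab hbi.symm, by simp⟩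
  | cast j =>
    obtain ⟨bb, hbb, rfl⟩ := ih (Fin.init a) (fun j => halev j.castSucc) hsep.init j b hb hab
    have hlast : a (Fin.last n) = cond m (g' τ (a i.castSucc)) (g τ (a i.castSucc)) := by
      rw [← hlink]
      exact (hf.left_inv ((halev _).trans_le hlohi)).symm
    refine ⟨_, hsnoc bb hbb (cond m (g' τ (bb i)) (g τ (bb i))) ?_ ?_ ?_, by simp⟩
    · exact (hf.symm.height_eq (hbb.height_eq i).le).trans (hbb.height_eq i)
    · exact hlast ▸ hf.symm.map_lt (hbb.height_eq i).le (hbb.lt i)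
    · exact hf.right_inv (hbb.height_eq i).le

theorem succ_of_forall_not_link (ih : PointedLiftable T lo hi g g' n) (hlohi : lo < hi)
    (hhi : hi < omega1) {a : Fin (n + 1) → α} (halev : ∀ i, T.height (a i) = lo)
    (hsep : AutoSepTuple g g' a)
    (hlink : ∀ (i : Fin n) m τ,
      cond m (g τ (a (Fin.last n))) (g' τ (a (Fin.last n))) ≠ a i.castSucc)
    (nbar : Fin (n + 1)) (b : α) (hb : T.height b = hi) (hab : a nbar < b) :
    ∃ bb, IsLift T hi g g' a bb ∧ bb nbar = b := by
  have hsnoc : ∀ bb, IsLift T hi g g' (Fin.init a) bb → ∀ c, T.height c = hi →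
      a (Fin.last n) < c → IsLift T hi g g' a (Fin.snoc (α := fun _ => α) bb c) :=
    fun bb hbb c hc hac => hbb.snoc hc hac fun i m τ h => absurd h (hlink i m τ)
  cases nbar using Fin.lastCases with
  | last =>
    obtain ⟨bb, hbb⟩ := ih.exists_isLift hlohi hhi (fun j => halev j.castSucc) hsep.init
    exact ⟨_, hsnoc bb hbb b hb hab, by simp⟩
  | cast j =>
    obtain ⟨bb, hbb, rfl⟩ := ih (Fin.init a) (fun j => halev j.castSucc) hsep.init j b hb hab
    obtain ⟨c, hac, hc⟩ := T.exists_above (a (Fin.last n)) ((halev _).trans_lt hlohi) hhi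
    exact ⟨_, hsnoc bb hbb c hc hac, by simp⟩

end PointedLiftable

theorem pointedLiftable (hlohi : lo < hi) (hhi : hi < omega1)
    (hg : ∀ τ, IsTreeAuto T hi (g τ) (g' τ)) (n : ℕ) : PointedLiftable T lo hi g g' n := by
  induction n with
  | zero => exact PointedLiftable.zero
  | succ n ih =>
    intro a halev hsep
    by_cases hlink : ∃ i m τ,
        cond m (g τ (a (Fin.last n))) (g' τ (a (Fin.last n))) = a (Fin.castSucc i)
    · obtain ⟨i, m, τ, hlink⟩ := hlink
      exact ih.succ_of_link hlohi.le hg halev hsep hlink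
    · push Not at hlink
      exact ih.succ_of_forall_not_link hlohi hhi halev hsep hlink

end Lift

theorem auto_one_key_property_general
    (T : OmegaOneTree α)
    (lo hi : Ordinal) (hlohi : lo < hi) (hhi : hi < omega1)
    (n : ℕ) (a : Fin n → α)
    (halev : ∀ i, T.height (a i) = lo)
    {ι : Type} (g g' : ι → α → α)
    (hg : ∀ τ, IsTreeAuto T hi (g τ) (g' τ))
    (hsep : AutoSepTuple g g' a)
    (nbar : Fin n) (b : α) (hb : T.height b = hi) (hab : a nbar < b) :
    ∃ bb : Fin n → α,
      (∀ i, T.height (bb i) = hi ∧ a i < bb i) ∧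
      bb nbar = b ∧
      ∀ τ : ι, AutoConsistentPair (g τ) a bb := by
  obtain ⟨bb, hbb, hbnbar⟩ := pointedLiftable hlohi hhi hg n a halev hsep nbar b hb hab
  exact ⟨bb, fun i => ⟨hbb.height_eq i, hbb.lt i⟩, hbnbar,
    fun τ => hbb.autoConsistentPair hlohi.le halev (hg τ) (hsep.1 · τ)⟩

/-- Proposition 5.12 (1-Key Property for automorphisms). -/
theorem auto_one_key_property
    (T : OmegaOneTree α)
    (lo hi : Ordinal) (hlohi : lo < hi) (hhi : hi < omega1)
    (n : ℕ) (a : Fin n → α) (hainj : Function.Injective a)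
    (halev : ∀ i, T.height (a i) = lo)
    {ι : Type} [Finite ι] (g g' : ι → α → α)
    (hg : ∀ τ, IsTreeAuto T hi (g τ) (g' τ))
    (hsep : AutoSepTuple g g' a)
    (nbar : Fin n) (b : α) (hb : T.height b = hi) (hab : a nbar < b) :
    ∃ bb : Fin n → α,
      (∀ i, T.height (bb i) = hi ∧ a i < bb i) ∧
      bb nbar = b ∧
      ∀ τ : ι, AutoConsistentPair (g τ) a bb :=
  auto_one_key_property_general T lo hi hlohi hhi n a halev g g' hg hsep nbar b hb hab
end
end

section
/- Let γ < ω₁ and let {f_τ : τ ∈ I} be a countable indexed family of automorphisms of T↾(γ+1). Then there exists an indexed family {g_τ : τ ∈ I} of automorphisms of T↾(γ+2) such that: (1) f_τ ⊆ g_τ for all τ ∈ I; and (2) for all distinct τ₀, τ₁ ∈ I and all x ∈ T_{γ+1}, g_{τ₀}(x) ≠ g_{τ₁}(x). -/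
noncomputable section

variable {α : Type} [PartialOrder α]

/-!
Enumerate the immediate successors of every node by `ℤ` (possible since they form a countably
infinite set). An automorphism `F` of `T↾(γ+1)` then extends to `T↾(γ+2)` by sending the
successor of `v` with index `k` to the successor of `F v` with index `k + d`, for any shift
`d : ℤ`. Choosing the shifts `d_τ` injectively in `τ` makes the extensions disagree at every
node of level `γ + 1`.
-/

namespace OmegaOneTree

variable (T : OmegaOneTree α)

def children (u : α) : Set α :=
  {y : α | u < y ∧ T.height y = T.height u + 1}

lemma nonempty_children_equiv_int (u : α) : Nonempty (T.children u ≃ ℤ) := by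
  have : Countable (T.children u) :=
    ((T.level_countable (T.height u + 1)).mono fun _ hy => hy.2).to_subtype
  have : Infinite (T.children u) := (T.splitting u).to_subtype
  exact nonempty_equiv_of_countable

variable {T}

lemma height_restrict_of_height_eq_add_one {x : α} {γ : Ordinal} (hx : T.height x = γ + 1) :
    T.height (T.restrict x γ) = γ :=
  T.height_restrict x (hx ▸ le_self_add)

lemma mem_children_restrict {x : α} {γ : Ordinal} (hx : T.height x = γ + 1) :
    x ∈ T.children (T.restrict x γ) := by
  have hres : T.restrict x γ ≤ x := T.restrict_le x (hx ▸ le_self_add)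
  refine ⟨hres.lt_of_ne fun h => ?_, by rw [height_restrict_of_height_eq_add_one hx, hx]⟩
  have := height_restrict_of_height_eq_add_one hx
  rw [h, hx] at this
  exact (lt_add_one γ).ne' this

lemma restrict_eq_of_mem_children {v x : α} {γ : Ordinal} (hv : T.height v = γ)
    (hx : x ∈ T.children v) : T.restrict x γ = v :=
  T.restrict_eq hx.1.le hv

lemma le_restrict_of_lt {x y : α} {γ : Ordinal} (hy : T.height y = γ + 1) (hxy : x < y) :
    x ≤ T.restrict y γ := by
  have hx : T.height x ≤ γ := Order.lt_add_one_iff.1 (hy ▸ T.height_strictMono hxy)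
  rcases T.pred_linear hxy (mem_children_restrict hy).1 with h | h
  · exact h
  · refine (h.lt_or_eq.resolve_left fun hlt => ?_).ge
    have := T.height_strictMono hlt
    rw [height_restrict_of_height_eq_add_one hy] at this
    exact this.not_ge hx

variable (E : ∀ u : α, T.children u ≃ ℤ) (γ : Ordinal)

open Classical in
def extendByShift (F : α → α) (d : ℤ) (x : α) : α :=
  if T.height x ≤ γ then F x
  else if hx : T.height x = γ + 1 then
    ((E (F (T.restrict x γ))).symm (E (T.restrict x γ) ⟨x, mem_children_restrict hx⟩ + d) : α)
  else x

variable {E γ} {F : α → α} {d : ℤ}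

lemma extendByShift_of_height_le {x : α} (hx : T.height x ≤ γ) :
    extendByShift E γ F d x = F x :=
  if_pos hx

lemma extendByShift_of_mem_children {v x : α} (hv : T.height v = γ) (hx : x ∈ T.children v) :
    extendByShift E γ F d x = ((E (F v)).symm (E v ⟨x, hx⟩ + d) : α) := by
  have hxγ : T.height x = γ + 1 := by rw [hx.2, hv]
  obtain rfl := restrict_eq_of_mem_children hv hx
  rw [extendByShift, if_neg (hxγ ▸ (lt_add_one γ).not_ge), dif_pos hxγ]

lemma extendByShift_mem_children {v x : α} (hv : T.height v = γ) (hx : x ∈ T.children v) :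
    extendByShift E γ F d x ∈ T.children (F v) := by
  rw [extendByShift_of_mem_children hv hx]
  exact Subtype.property _

lemma extendByShift_strictMono (hmono : ∀ x y : α, T.height y ≤ γ → x < y → F x < F y)
    {x y : α} (hy : T.height y ≤ γ + 1) (hxy : x < y) :
    extendByShift E γ F d x < extendByShift E γ F d y := by
  rcases hy.lt_or_eq with hlt | htop
  · have hle := Order.lt_add_one_iff.1 hlt
    rw [extendByShift_of_height_le hle,
      extendByShift_of_height_le ((T.height_strictMono hxy).le.trans hle)]
    exact hmono x y hle hxy
  · have hx : T.height x ≤ γ := Order.lt_add_one_iff.1 (htop ▸ T.height_strictMono hxy)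
    have hv := height_restrict_of_height_eq_add_one htop
    have hFx : F x ≤ F (T.restrict y γ) := by
      rcases (le_restrict_of_lt htop hxy).lt_or_eq with h | h
      · exact (hmono _ _ hv.le h).le
      · rw [h]
    rw [extendByShift_of_height_le hx]
    exact hFx.trans_lt (extendByShift_mem_children hv (mem_children_restrict htop)).1

variable (hF : ∀ u : α, T.height u ≤ γ → T.height (F u) = T.height u)
include hF

lemma restrict_extendByShift {x : α} (hx : T.height x = γ + 1) :
    T.restrict (extendByShift E γ F d x) γ = F (T.restrict x γ) := by
  have hv := height_restrict_of_height_eq_add_one hx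
  exact restrict_eq_of_mem_children (by rw [hF _ hv.le, hv])
    (extendByShift_mem_children hv (mem_children_restrict hx))

lemma height_extendByShift {x : α} (hx : T.height x ≤ γ + 1) :
    T.height (extendByShift E γ F d x) = T.height x := by
  rcases hx.lt_or_eq with hlt | htop
  · have hle := Order.lt_add_one_iff.1 hlt
    rw [extendByShift_of_height_le hle, hF x hle]
  · have hv := height_restrict_of_height_eq_add_one htop
    rw [(extendByShift_mem_children hv (mem_children_restrict htop)).2, hF _ hv.le, hv, htop]

lemma extendByShift_neg_extendByShift {F' : α → α}
    (hF'F : ∀ u : α, T.height u ≤ γ → F' (F u) = u) {x : α} (hx : T.height x ≤ γ + 1) :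
    extendByShift E γ F' (-d) (extendByShift E γ F d x) = x := by
  rcases hx.lt_or_eq with hlt | htop
  · have hle := Order.lt_add_one_iff.1 hlt
    rw [extendByShift_of_height_le hle, extendByShift_of_height_le (by rwa [hF x hle]),
      hF'F x hle]
  · set v := T.restrict x γ
    have hv : T.height v = γ := height_restrict_of_height_eq_add_one htop
    have hxv : x ∈ T.children v := mem_children_restrict htop
    rw [extendByShift_of_mem_children hv hxv,
      extendByShift_of_mem_children (by rw [hF v hv.le, hv]) (Subtype.property _),
      Subtype.coe_eta, Equiv.apply_symm_apply, add_neg_cancel_right, hF'F v hv.le,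
      Equiv.symm_apply_apply]

omit hF

lemma shift_eq_of_extendByShift_eq {F₀ F₁ : α → α} {d₀ d₁ : ℤ}
    (hF₀ : ∀ u : α, T.height u ≤ γ → T.height (F₀ u) = T.height u)
    (hF₁ : ∀ u : α, T.height u ≤ γ → T.height (F₁ u) = T.height u)
    {x : α} (hx : T.height x = γ + 1)
    (heq : extendByShift E γ F₀ d₀ x = extendByShift E γ F₁ d₁ x) : d₀ = d₁ := by
  have hF : F₀ (T.restrict x γ) = F₁ (T.restrict x γ) := by
    rw [← restrict_extendByShift hF₀ hx, ← restrict_extendByShift hF₁ hx, heq]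
  have hv := height_restrict_of_height_eq_add_one hx
  rw [extendByShift_of_mem_children hv (mem_children_restrict hx),
    extendByShift_of_mem_children hv (mem_children_restrict hx), hF] at heq
  exact add_left_cancel ((E _).symm.injective (Subtype.coe_injective heq))

lemma isTreeAuto_extendByShift {F' : α → α} (hF : IsTreeAuto T γ F F') :
    IsTreeAuto T (γ + 1) (extendByShift E γ F d) (extendByShift E γ F' (-d)) := by
  obtain ⟨hF, hF', hF'F, hFF', hmono, hmono'⟩ := hF
  refine ⟨fun x => height_extendByShift hF, fun x => height_extendByShift hF',
    fun x => extendByShift_neg_extendByShift hF hF'F, fun x hx => ?_,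
    fun x y => extendByShift_strictMono hmono, fun x y => extendByShift_strictMono hmono'⟩
  simpa only [neg_neg] using extendByShift_neg_extendByShift (d := -d) hF' hFF' hx

lemma autoExtends_extendByShift (F F' : α → α) (d : ℤ) :
    AutoExtends T γ F F' (extendByShift E γ F d) (extendByShift E γ F' (-d)) :=
  ⟨fun _ => extendByShift_of_height_le, fun _ => extendByShift_of_height_le⟩

end OmegaOneTree

open OmegaOneTree in
theorem auto_family_extension_pointwise_distinct_general
    (T : OmegaOneTree α) (γ : Ordinal)
    {ι : Type} [Countable ι] (f f' : ι → α → α)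
    (hf : ∀ τ, IsTreeAuto T γ (f τ) (f' τ)) :
    ∃ g g' : ι → α → α,
      (∀ τ, IsTreeAuto T (γ + 1) (g τ) (g' τ)) ∧
      (∀ τ, AutoExtends T γ (f τ) (f' τ) (g τ) (g' τ)) ∧
      (∀ τ₀ τ₁ : ι, τ₀ ≠ τ₁ → ∀ x : α, T.height x = γ + 1 → g τ₀ x ≠ g τ₁ x) := by
  obtain ⟨c, hc⟩ := exists_injective_nat ι
  let E : ∀ u : α, T.children u ≃ ℤ := fun u => (T.nonempty_children_equiv_int u).some
  refine ⟨fun τ => extendByShift E γ (f τ) (c τ), fun τ => extendByShift E γ (f' τ) (-(c τ)),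
    fun τ => isTreeAuto_extendByShift (hf τ), fun τ => autoExtends_extendByShift _ _ _, ?_⟩
  intro τ₀ τ₁ hne x hx heq
  exact hne (hc (Int.natCast_inj.1
    (shift_eq_of_extendByShift_eq (hf τ₀).1 (hf τ₁).1 hx heq)))

/-- Lemma 5.13: a countable family of automorphisms of `T↾(γ+1)` extends to a
family of automorphisms of `T↾(γ+2)` which take pairwise distinct values at
every node of level `γ+1`. -/
theorem auto_family_extension_pointwise_distinct
    (T : OmegaOneTree α) (γ : Ordinal) (hγ : γ < omega1)
    {ι : Type} [Countable ι] (f f' : ι → α → α)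
    (hf : ∀ τ, IsTreeAuto T γ (f τ) (f' τ)) :
    ∃ g g' : ι → α → α,
      (∀ τ, IsTreeAuto T (γ + 1) (g τ) (g' τ)) ∧
      (∀ τ, AutoExtends T γ (f τ) (f' τ) (g τ) (g' τ)) ∧
      (∀ τ₀ τ₁ : ι, τ₀ ≠ τ₁ → ∀ x : α, T.height x = γ + 1 → g τ₀ x ≠ g τ₁ x) :=
  auto_family_extension_pointwise_distinct_general T γ f f' hf
end
end
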